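/- arXiv:math/0405532 — 6 statements merged into one kernel-verified Lean document; each statement's English description precedes it below -/
import Mathlib

section
/- Let D be a Delone set of finite type in ℝ^d. Then there exists a finite collection F⃗ of vectors in D⃗ = D − D = {x − y : x, y ∈ D} such that F⃗ = −F⃗ and every vector in D⃗ is a linear combination with nonnegative integer coefficients of vectors in F⃗. -/
open Pointwise

/-- A Delone set in `ℝ^d`: for some `r, R > 0`, every open ball of radius `r` contains
at most one point of `D` and every open ball of radius `R` contains at least one point of `D`. -/
def IsDelone {d : ℕ} (D : Set (EuclideanSpace ℝ (Fin d))) : Prop :=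
  ∃ r R : ℝ, 0 < r ∧ 0 < R ∧
    (∀ c : EuclideanSpace ℝ (Fin d), Set.Subsingleton (D ∩ Metric.ball c r)) ∧
    (∀ c : EuclideanSpace ℝ (Fin d), (D ∩ Metric.ball c R).Nonempty)

/-- A set `D ⊆ ℝ^d` is of finite type if for each `M > 0` there are only finitely many
patches (finite subsets) of `D` of diameter smaller than `M`, up to translation. -/
def IsFiniteType {d : ℕ} (D : Set (EuclideanSpace ℝ (Fin d))) : Prop :=
  ∀ M : ℝ, 0 < M → ∃ Ps : Set (Set (EuclideanSpace ℝ (Fin d))), Ps.Finite ∧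
    ∀ P : Set (EuclideanSpace ℝ (Fin d)), P ⊆ D → P.Finite → Metric.diam P < M →
      ∃ Q ∈ Ps, ∃ t : EuclideanSpace ℝ (Fin d), P = (fun z => t + z) '' Q

theorem stmt0 (d : ℕ) (D : Set (EuclideanSpace ℝ (Fin d)))
    (hD : IsDelone D) (hft : IsFiniteType D) :
    ∃ F : Finset (EuclideanSpace ℝ (Fin d)),
      (↑F : Set (EuclideanSpace ℝ (Fin d))) ⊆ D - D ∧
      (∀ v ∈ F, -v ∈ F) ∧
      ∀ v ∈ D - D, ∃ c : EuclideanSpace ℝ (Fin d) → ℕ,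
        v = ∑ f ∈ F, (c f : ℝ) • f := by
  classical
  obtain ⟨r, R, hr, hR, hpack, hcov⟩ := hD
  set S : Set (EuclideanSpace ℝ (Fin d)) := {v | v ∈ D - D ∧ ‖v‖ < 3 * R} with hS
  have hfin : S.Finite := by
    obtain ⟨Ps, hPs, hP⟩ := hft (3 * R) (by positivity)
    have hsub : S ⊆ ⋃ Q ∈ {Q ∈ Ps | Q.Finite}, Q - Q := by
      rintro v ⟨⟨x, hx, y, hy, rfl⟩, hv⟩
      have hpairfin : ({x, y} : Set (EuclideanSpace ℝ (Fin d))).Finite :=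
        (Set.finite_singleton y).insert x
      have hd : Metric.diam ({x, y} : Set (EuclideanSpace ℝ (Fin d))) < 3 * R := by
        rw [Metric.diam_pair]
        simpa [dist_eq_norm] using hv
      obtain ⟨Q, hQ, t, ht⟩ := hP {x, y}
        (by rintro z (rfl | rfl) <;> assumption) hpairfin hd
      have hQfin : Q.Finite := by
        refine (Set.finite_image_iff ?_).mp (ht ▸ hpairfin)
        exact (add_right_injective t).injOn
      have hxQ : x ∈ (fun z => t + z) '' Q :=
        ht ▸ (by simp : x ∈ ({x, y} : Set (EuclideanSpace ℝ (Fin d))))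
      have hyQ : y ∈ (fun z => t + z) '' Q :=
        ht ▸ (by simp : y ∈ ({x, y} : Set (EuclideanSpace ℝ (Fin d))))
      obtain ⟨a, ha, hxa⟩ := hxQ
      obtain ⟨b, hb, hyb⟩ := hyQ
      have hab : x - y = a - b := by rw [← hxa, ← hyb]; show t + a - (t + b) = a - b; abel
      change x - y ∈ _
      rw [hab]
      exact Set.mem_biUnion ⟨hQ, hQfin⟩ (Set.sub_mem_sub ha hb)
    refine Set.Finite.subset ?_ hsub
    refine Set.Finite.biUnion (hPs.subset (Set.sep_subset _ _)) ?_
    rintro Q ⟨-, hQfin⟩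
    exact hQfin.sub hQfin
  set F : Finset (EuclideanSpace ℝ (Fin d)) := hfin.toFinset with hF
  have hmemF : ∀ v : EuclideanSpace ℝ (Fin d), v ∈ F ↔ v ∈ D - D ∧ ‖v‖ < 3 * R := by
    intro v; rw [hF, Set.Finite.mem_toFinset]; rfl
  have good0 : ∃ c : EuclideanSpace ℝ (Fin d) → ℕ, (0 : EuclideanSpace ℝ (Fin d)) = ∑ f ∈ F, (c f : ℝ) • f :=
    ⟨fun _ => 0, by simp⟩
  have goodF : ∀ v ∈ F, ∃ c : EuclideanSpace ℝ (Fin d) → ℕ, v = ∑ f ∈ F, (c f : ℝ) • f := by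
    intro v hv
    refine ⟨fun g => if g = v then 1 else 0, ?_⟩
    have : ∀ g ∈ F, (((if g = v then 1 else 0 : ℕ)) : ℝ) • g = if g = v then g else 0 := by
      intro g _; split <;> simp
    rw [Finset.sum_congr rfl this, Finset.sum_ite_eq' F v (fun g => g), if_pos hv]
  have goodAdd : ∀ v w : EuclideanSpace ℝ (Fin d),
      (∃ c : EuclideanSpace ℝ (Fin d) → ℕ, v = ∑ f ∈ F, (c f : ℝ) • f) →
      (∃ c : EuclideanSpace ℝ (Fin d) → ℕ, w = ∑ f ∈ F, (c f : ℝ) • f) →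
      ∃ c : EuclideanSpace ℝ (Fin d) → ℕ, v + w = ∑ f ∈ F, (c f : ℝ) • f := by
    rintro v w ⟨c1, h1⟩ ⟨c2, h2⟩
    refine ⟨fun g => c1 g + c2 g, ?_⟩
    rw [h1, h2, ← Finset.sum_add_distrib]
    refine Finset.sum_congr rfl fun g _ => ?_
    rw [← add_smul]
    norm_num
  have chain : ∀ n : ℕ, ∀ x ∈ D, ∀ y ∈ D, dist x y ≤ n * R →
      ∃ c : EuclideanSpace ℝ (Fin d) → ℕ, x - y = ∑ f ∈ F, (c f : ℝ) • f := by
    intro n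
    induction n with
    | zero =>
      intro x hx y hy h
      have hxy : x = y := by
        have h0 := dist_nonneg (x := x) (y := y)
        exact dist_eq_zero.mp (le_antisymm (by simpa using h) h0)
      subst hxy
      simpa using good0
    | succ n ih =>
      intro x hx y hy h
      by_cases hcase : dist x y < 3 * R
      · refine goodF _ ?_
        rw [hmemF]
        exact ⟨Set.sub_mem_sub hx hy, by rwa [← dist_eq_norm]⟩
      push_neg at hcase
      have hdpos : (0 : ℝ) < dist x y := lt_of_lt_of_le (by positivity) hcase
      set q : EuclideanSpace ℝ (Fin d) := y + (2 * R / dist x y) • (x - y) with hq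
      have hqy : dist q y = 2 * R := by
        rw [dist_eq_norm]
        have hqy' : q - y = (2 * R / dist x y) • (x - y) := by rw [hq]; abel
        rw [hqy', norm_smul, Real.norm_eq_abs, abs_of_nonneg (by positivity),
          ← dist_eq_norm, div_mul_cancel₀]
        exact ne_of_gt hdpos
      have hxq : dist x q = dist x y - 2 * R := by
        rw [dist_eq_norm]
        have h1 : x - q = (1 - 2 * R / dist x y) • (x - y) := by
          rw [hq, sub_smul, one_smul]; abel
        have h2 : (0:ℝ) ≤ 1 - 2 * R / dist x y := by
          rw [sub_nonneg, div_le_one hdpos]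
          linarith
        rw [h1, norm_smul, Real.norm_eq_abs, abs_of_nonneg h2, ← dist_eq_norm]
        field_simp
      obtain ⟨p, hpD, hpq⟩ := hcov q
      rw [Metric.mem_ball] at hpq
      have hstep : p - y ∈ F := by
        rw [hmemF]
        refine ⟨Set.sub_mem_sub hpD hy, ?_⟩
        rw [← dist_eq_norm]
        calc dist p y ≤ dist p q + dist q y := dist_triangle p q y
        _ < R + 2 * R := by rw [hqy]; linarith
        _ = 3 * R := by ring
      have hxp : dist x p ≤ n * R := by
        have : dist x p < n * R := by
          calc dist x p ≤ dist x q + dist q p := dist_triangle x q p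
          _ < (dist x y - 2 * R) + R := by rw [hxq, dist_comm q p]; linarith
          _ ≤ (n : ℝ) * R := by push_cast at h ⊢; linarith
        linarith
      have h1 := ih x hx p hpD hxp
      have h2 := goodF _ hstep
      have h3 := goodAdd _ _ h1 h2
      rw [sub_add_sub_cancel] at h3
      exact h3
  refine ⟨F, ?_, ?_, ?_⟩
  · intro v hv
    exact ((hmemF v).mp hv).1
  · intro v hv
    rw [hmemF] at hv ⊢
    obtain ⟨⟨a, ha, b, hb, hab⟩, hn⟩ := hv
    change a - b = v at hab
    refine ⟨⟨b, hb, a, ha, ?_⟩, ?_⟩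
    · show b - a = -v
      rw [← hab]; abel
    · rw [norm_neg]; exact hn
  · rintro v ⟨x, hx, y, hy, rfl⟩
    obtain ⟨n, hn⟩ := exists_nat_ge (dist x y / R)
    exact chain n x hx y hy (by rw [div_le_iff₀ hR] at hn; linarith)
end

section
/- Let (X,𝒜) be a minimal action of ℤ^d by homeomorphisms on a Cantor set X, let C ⊆ X be a nonempty clopen set and y ∈ C. Then the set of return times R_C(y) = {n ∈ ℤ^d : 𝒜(n,y) ∈ C} is repetitive: for each finite patch P ⊆ R_C(y) there exists M > 0 such that every open ball of radius M in ℝ^d contains a translated copy of P lying inside R_C(y) (i.e., contains a set m + P ⊆ R_C(y) for some m ∈ ℤ^d). -/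
/-!
Let `D` be the open set of points `x` with `𝒜(p, x) ∈ C` for every `p ∈ P`; it contains `y`.
By minimality every orbit meets `D`, so by compactness finitely many translates `𝒜(n, ·)⁻¹ D`,
`n ∈ F`, cover `X`. Given a centre `c`, round it to a lattice point `k`; some `n ∈ F` has
`𝒜(n + k, y) ∈ D`, i.e. `n + k + P ⊆ R_C(y)`, and `n + k + P` stays within a distance of `c`
bounded in terms of `F`, `P` and `d` only.
-/

/-- The canonical embedding `ℤ^d → ℝ^d` (Euclidean space). -/
noncomputable def toRd (d : ℕ) (n : Fin d → ℤ) : EuclideanSpace ℝ (Fin d) :=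
  WithLp.toLp 2 (fun i => (n i : ℝ))

theorem exists_finset_forall_exists_mem_of_dense_orbit {ι X : Type*} [TopologicalSpace X]
    [CompactSpace X] (A : ι → X → X) (hA : ∀ n, Continuous (A n))
    (hmin : ∀ x, Dense (Set.range fun n => A n x)) {U : Set X} (hU : IsOpen U)
    (hne : U.Nonempty) : ∃ F : Finset ι, ∀ x, ∃ n ∈ F, A n x ∈ U := by
  have hcover : (Set.univ : Set X) ⊆ ⋃ n, A n ⁻¹' U := fun x _ => by
    obtain ⟨_, ⟨n, rfl⟩, hn⟩ := (hmin x).exists_mem_open hU hne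
    exact Set.mem_iUnion.2 ⟨n, hn⟩
  obtain ⟨F, hF⟩ := isCompact_univ.elim_finite_subcover _ (fun n => hU.preimage (hA n)) hcover
  exact ⟨F, fun x => by simpa using hF (Set.mem_univ x)⟩

section

variable {d : ℕ}

theorem toRd_add (a b : Fin d → ℤ) : toRd d (a + b) = toRd d a + toRd d b := by
  ext i
  simp [toRd]

theorem dist_toRd_round_le (c : EuclideanSpace ℝ (Fin d)) :
    dist (toRd d fun i => round (c i)) c ≤ √d := by
  rw [EuclideanSpace.dist_eq]
  gcongr
  calc ∑ i, dist (toRd d (fun i => round (c i)) i) (c i) ^ 2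
      ≤ ∑ _i : Fin d, (1 : ℝ) := by
        gcongr with i
        have h := abs_sub_round (c i)
        rw [abs_sub_comm] at h
        simp only [toRd, PiLp.toLp_apply, Real.dist_eq]
        nlinarith [abs_nonneg ((round (c i) : ℝ) - c i), sq_abs ((round (c i) : ℝ) - c i)]
    _ = d := by simp

theorem dist_toRd_add_add_le (n k p : Fin d → ℤ) (c : EuclideanSpace ℝ (Fin d)) :
    dist (toRd d (n + k + p)) c ≤ ‖toRd d n‖ + ‖toRd d p‖ + dist (toRd d k) c :=
  calc dist (toRd d (n + k + p)) c
      ≤ dist (toRd d (n + k + p)) (toRd d k) + dist (toRd d k) c := dist_triangle _ _ _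
    _ = ‖toRd d n + toRd d p‖ + dist (toRd d k) c := by
        rw [dist_eq_norm, toRd_add, toRd_add, add_sub_right_comm, add_sub_cancel_right]
    _ ≤ ‖toRd d n‖ + ‖toRd d p‖ + dist (toRd d k) c := by gcongr; exact norm_add_le _ _

end

theorem stmt2_general (d : ℕ) (X : Type*) [MetricSpace X] [CompactSpace X]
    (A : (Fin d → ℤ) → X → X)
    (hAadd : ∀ n m : Fin d → ℤ, ∀ y : X, A (n + m) y = A n (A m y))
    (hAcont : ∀ n : Fin d → ℤ, Continuous (A n))
    (hmin : ∀ y : X, Dense (Set.range fun n : Fin d → ℤ => A n y))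
    (C : Set X) (hC : IsClopen C) (y : X) :
    ∀ P : Finset (Fin d → ℤ), (↑P : Set (Fin d → ℤ)) ⊆ {n : Fin d → ℤ | A n y ∈ C} →
      ∃ M : ℝ, 0 < M ∧ ∀ c : EuclideanSpace ℝ (Fin d), ∃ m : Fin d → ℤ,
        (∀ p ∈ P, A (m + p) y ∈ C) ∧ (∀ p ∈ P, toRd d (m + p) ∈ Metric.ball c M) := by
  intro P hP
  set D : Set X := ⋂ p ∈ P, A p ⁻¹' C
  have hD : IsOpen D := isOpen_biInter_finset fun p _ => hC.isOpen.preimage (hAcont p)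
  have hyD : y ∈ D := Set.mem_iInter₂.2 fun p hp => hP hp
  obtain ⟨F, hF⟩ := exists_finset_forall_exists_mem_of_dense_orbit A hAcont hmin hD ⟨y, hyD⟩
  refine ⟨∑ n ∈ F, ‖toRd d n‖ + ∑ p ∈ P, ‖toRd d p‖ + √d + 1, by positivity, fun c => ?_⟩
  set k : Fin d → ℤ := fun i => round (c i)
  obtain ⟨n, hnF, hnD⟩ := hF (A k y)
  refine ⟨n + k, fun p hp => ?_, fun p hp => ?_⟩
  · rw [add_comm, hAadd, hAadd]
    exact Set.mem_iInter₂.1 hnD p hp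
  · rw [Metric.mem_ball]
    calc dist (toRd d (n + k + p)) c ≤ ‖toRd d n‖ + ‖toRd d p‖ + dist (toRd d k) c :=
          dist_toRd_add_add_le n k p c
      _ ≤ ∑ n ∈ F, ‖toRd d n‖ + ∑ p ∈ P, ‖toRd d p‖ + √d := by
          gcongr
          · exact Finset.single_le_sum (fun _ _ => norm_nonneg _) hnF
          · exact Finset.single_le_sum (fun _ _ => norm_nonneg _) hp
          · exact dist_toRd_round_le c
      _ < _ := lt_add_one _

/-- Let `(X, 𝒜)` be a minimal `ℤ^d`-action by homeomorphisms on a Cantor set `X`, `C` a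
nonempty clopen subset and `y ∈ C`. Then `R_C(y) = {n ∈ ℤ^d : 𝒜(n, y) ∈ C}` is repetitive:
for each finite patch `P ⊆ R_C(y)` there exists `M > 0` such that every open ball of radius
`M` in `ℝ^d` contains a translated copy `m + P ⊆ R_C(y)` for some `m ∈ ℤ^d`. -/
theorem stmt2 (d : ℕ) (X : Type*) [MetricSpace X] [CompactSpace X] [Nonempty X]
    [TotallyDisconnectedSpace X] (hperf : Perfect (Set.univ : Set X))
    (A : (Fin d → ℤ) → X → X)
    (hA0 : ∀ y : X, A 0 y = y)
    (hAadd : ∀ n m : Fin d → ℤ, ∀ y : X, A (n + m) y = A n (A m y))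
    (hAcont : ∀ n : Fin d → ℤ, Continuous (A n))
    (hmin : ∀ y : X, Dense (Set.range fun n : Fin d → ℤ => A n y))
    (C : Set X) (hC : IsClopen C) (hCne : C.Nonempty) (y : X) (hy : y ∈ C) :
    ∀ P : Finset (Fin d → ℤ), (↑P : Set (Fin d → ℤ)) ⊆ {n : Fin d → ℤ | A n y ∈ C} →
      ∃ M : ℝ, 0 < M ∧ ∀ c : EuclideanSpace ℝ (Fin d), ∃ m : Fin d → ℤ,
        (∀ p ∈ P, A (m + p) y ∈ C) ∧ (∀ p ∈ P, toRd d (m + p) ∈ Metric.ball c M) :=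
  stmt2_general d X A hAadd hAcont hmin C hC y
end

section
/- Let (X,𝒜) be a minimal action of ℤ^d by homeomorphisms on a Cantor set X, let C ⊆ X be a nonempty clopen set and let y, y' ∈ C. Then the sets of return times R_C(y) = {n ∈ ℤ^d : 𝒜(n,y) ∈ C} and R_C(y') = {n ∈ ℤ^d : 𝒜(n,y') ∈ C} have the same patches up to translation: for every finite patch P ⊆ R_C(y) there exists m ∈ ℤ^d such that m + P ⊆ R_C(y'), and conversely. -/
/-- Let `(X, 𝒜)` be a minimal `ℤ^d`-action by homeomorphisms on a Cantor set `X`, `C` a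
nonempty clopen subset and `y, y' ∈ C`. Then the return time sets
`R_C(y) = {n : 𝒜(n, y) ∈ C}` and `R_C(y')` have the same finite patches up to translation. -/
theorem stmt3 (d : ℕ) (X : Type*) [MetricSpace X] [CompactSpace X] [Nonempty X]
    [TotallyDisconnectedSpace X] (hperf : Perfect (Set.univ : Set X))
    (A : (Fin d → ℤ) → X → X)
    (hA0 : ∀ y : X, A 0 y = y)
    (hAadd : ∀ n m : Fin d → ℤ, ∀ y : X, A (n + m) y = A n (A m y))
    (hAcont : ∀ n : Fin d → ℤ, Continuous (A n))
    (hmin : ∀ y : X, Dense (Set.range fun n : Fin d → ℤ => A n y))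
    (C : Set X) (hC : IsClopen C) (hCne : C.Nonempty)
    (y y' : X) (hy : y ∈ C) (hy' : y' ∈ C) :
    (∀ P : Finset (Fin d → ℤ), (↑P : Set (Fin d → ℤ)) ⊆ {n : Fin d → ℤ | A n y ∈ C} →
      ∃ m : Fin d → ℤ, ∀ p ∈ P, A (m + p) y' ∈ C) ∧
    (∀ P : Finset (Fin d → ℤ), (↑P : Set (Fin d → ℤ)) ⊆ {n : Fin d → ℤ | A n y' ∈ C} →
      ∃ m : Fin d → ℤ, ∀ p ∈ P, A (m + p) y ∈ C) := by
  have key : ∀ z z' : X, ∀ P : Finset (Fin d → ℤ),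
      (↑P : Set (Fin d → ℤ)) ⊆ {n : Fin d → ℤ | A n z ∈ C} →
      ∃ m : Fin d → ℤ, ∀ p ∈ P, A (m + p) z' ∈ C := by
    intro z z' P hP
    set U : Set X := ⋂ p ∈ P, (A p) ⁻¹' C with hU
    have hUopen : IsOpen U := isOpen_biInter_finset fun p _ => hC.2.preimage (hAcont p)
    have hUne : U.Nonempty := ⟨z, Set.mem_iInter₂.2 fun p hp => hP hp⟩
    obtain ⟨x, ⟨m, hm⟩, hxU⟩ := (hmin z').exists_mem_open hUopen hUne
    refine ⟨m, fun p hp => ?_⟩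
    have : A m z' ∈ U := by simpa [← hm] using hxU
    have hx : A p (A m z') ∈ C := Set.mem_iInter₂.1 this p hp
    rwa [add_comm, hAadd]
  exact ⟨key y y', key y' y⟩
end

section
/- Let (X,𝒜) be a minimal action of ℤ^d by homeomorphisms on a Cantor set X, let C ⊆ X be a nonempty clopen set, y ∈ C, and let R⃗_C = R_C(y) − R_C(y) be the set of return vectors. Then there exists a finite collection F⃗_C of vectors in R⃗_C such that F⃗_C = −F⃗_C and every vector in R⃗_C is a linear combination with nonnegative integer coefficients of vectors in F⃗_C. -/
open Pointwise Metric

/-! By compactness and minimality, the preimages of `C` under finitely many `A k`, `k ∈ K`, cover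
`X`; hence every `p ∈ ℤ^d` lies within sup-distance `M` of a return time, where `M` bounds `K`.
Let `F` be the return vectors of norm at most `2M + 1`. Given return times `r, s`, walk from `s`
to `r` by unit steps `p₀, p₁, …` and pick return times `sⱼ` within `M` of `pⱼ`: consecutive ones
differ by a vector of `F`, and `r - s` is the telescoping sum of these differences. -/

theorem iff_add_of_iff_add_single {ι : Type*} [Finite ι] [DecidableEq ι] {Q : (ι → ℤ) → Prop}
    (hQ : ∀ p i, Q p ↔ Q (p + Pi.single i 1)) (v : ι → ℤ) : ∀ p, Q p ↔ Q (p + v) := by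
  induction v using Pi.single_induction with
  | zero => simp
  | add f g hf hg => intro p; rw [hf, hg, add_assoc]
  | single i m =>
    induction m using Int.induction_on with
    | zero => simp
    | succ m ih => intro p; rw [ih, hQ, Pi.single_add, add_assoc]
    | pred m ih =>
      intro p
      rw [ih]
      conv_rhs => rw [hQ, add_assoc, ← Pi.single_add, sub_add_cancel]

theorem sub_mem_closure_of_forall_exists_norm_sub_le {ι : Type*} [Fintype ι] {R : Set (ι → ℤ)}
    {M : ℝ} (hR : ∀ p, ∃ q ∈ R, ‖q - p‖ ≤ M) {r s : ι → ℤ} (hr : r ∈ R) (hs : s ∈ R) :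
    r - s ∈ AddSubmonoid.closure ((R - R) ∩ closedBall 0 (2 * M + 1)) := by
  classical
  set S := AddSubmonoid.closure ((R - R) ∩ closedBall 0 (2 * M + 1))
  have hM : 0 ≤ M := let ⟨q, _, hq⟩ := hR 0; (norm_nonneg _).trans hq
  let Q : (ι → ℤ) → Prop := fun p ↦ ∀ s ∈ R, ‖s - p‖ ≤ M → r - s ∈ S
  have step : ∀ p e, ‖e‖ ≤ 1 → Q (p + e) → Q p := by
    intro p e he hQe s hs hsp
    obtain ⟨s', hs', hs'p⟩ := hR (p + e)
    have hss' : ‖s' - s‖ ≤ 2 * M + 1 := calc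
      ‖s' - s‖ = ‖(s' - (p + e)) + e - (s - p)‖ := by congr 1; abel
      _ ≤ ‖s' - (p + e)‖ + ‖e‖ + ‖s - p‖ := norm_sub_le_of_le (norm_add_le _ _) le_rfl
      _ ≤ 2 * M + 1 := by linarith
    have hgen : s' - s ∈ S :=
      AddSubmonoid.subset_closure ⟨Set.sub_mem_sub hs' hs, mem_closedBall_zero_iff.2 hss'⟩
    simpa using add_mem (hQe s' hs' hs'p) hgen
  have hQ : ∀ p i, Q p ↔ Q (p + Pi.single i 1) := fun p i ↦
    have hunit : ‖(Pi.single i 1 : ι → ℤ)‖ ≤ 1 := by rw [Pi.norm_single, norm_one]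
    ⟨fun h ↦ step _ (-Pi.single i 1) (by rwa [norm_neg]) (by rwa [add_neg_cancel_right]),
      step p _ hunit⟩
  have hQr : Q r := fun s hs hsr ↦ AddSubmonoid.subset_closure
    ⟨Set.sub_mem_sub hr hs, by rw [mem_closedBall_zero_iff, norm_sub_rev]; linarith⟩
  exact (iff_add_of_iff_add_single hQ (r - s) s).2 (by simpa using hQr) s hs (by simpa using hM)

theorem CompactSpace.exists_finset_forall_exists_apply_mem {X ι : Type*} [TopologicalSpace X]
    [CompactSpace X] {f : ι → X → X} (hf : ∀ n, Continuous (f n)) {U : Set X} (hU : IsOpen U)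
    (h : ∀ x, ∃ n, f n x ∈ U) : ∃ K : Finset ι, ∀ x, ∃ k ∈ K, f k x ∈ U := by
  obtain ⟨K, hK⟩ := isCompact_univ.elim_finite_subcover (fun n ↦ f n ⁻¹' U)
    (fun n ↦ hU.preimage (hf n)) fun x _ ↦ Set.mem_iUnion.2 (h x)
  exact ⟨K, fun x ↦ by simpa using hK (Set.mem_univ x)⟩

theorem stmt5_general (d : ℕ) (X : Type*) [MetricSpace X] [CompactSpace X]
    (A : (Fin d → ℤ) → X → X)
    (hAadd : ∀ n m : Fin d → ℤ, ∀ y : X, A (n + m) y = A n (A m y))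
    (hAcont : ∀ n : Fin d → ℤ, Continuous (A n))
    (hmin : ∀ y : X, Dense (Set.range fun n : Fin d → ℤ => A n y))
    (C : Set X) (hC : IsClopen C) (hCne : C.Nonempty) (y : X) :
    ∃ F : Finset (Fin d → ℤ),
      (↑F : Set (Fin d → ℤ)) ⊆
        ({n : Fin d → ℤ | A n y ∈ C} - {n : Fin d → ℤ | A n y ∈ C}) ∧
      (∀ v ∈ F, -v ∈ F) ∧
      ∀ v ∈ ({n : Fin d → ℤ | A n y ∈ C} - {n : Fin d → ℤ | A n y ∈ C} :
          Set (Fin d → ℤ)),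
        ∃ c : (Fin d → ℤ) → ℕ, v = ∑ f ∈ F, (c f : ℤ) • f := by
  set R := {n : Fin d → ℤ | A n y ∈ C}
  obtain ⟨K, hK⟩ := CompactSpace.exists_finset_forall_exists_apply_mem hAcont hC.isOpen fun x ↦
    let ⟨_, ⟨n, rfl⟩, hnC⟩ := (hmin x).exists_mem_open hC.isOpen hCne
    ⟨n, hnC⟩
  obtain ⟨M, hKM⟩ := K.finite_toSet.isBounded.subset_closedBall 0
  have hR : ∀ p, ∃ q ∈ R, ‖q - p‖ ≤ M := fun p ↦
    let ⟨k, hk, hkC⟩ := hK (A p y)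
    ⟨k + p, by simpa [R, hAadd] using hkC, by simpa using hKM hk⟩
  have hF := (isCompact_closedBall (0 : Fin d → ℤ) (2 * M + 1)).finite_of_discrete
    |>.inter_of_right (R - R)
  refine ⟨hF.toFinset, fun v hv ↦ (hF.mem_toFinset.1 hv).1, fun v hv ↦ ?_, ?_⟩
  · obtain ⟨⟨r, hr, s, hs, rfl⟩, hrs⟩ := hF.mem_toFinset.1 hv
    refine hF.mem_toFinset.2 ⟨⟨s, hs, r, hr, (neg_sub r s).symm⟩, ?_⟩
    simpa only [mem_closedBall_zero_iff, norm_neg] using hrs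
  · rintro v ⟨r, hr, s, hs, rfl⟩
    have hrs := sub_mem_closure_of_forall_exists_norm_sub_le hR hr hs
    rw [← hF.coe_toFinset, AddSubmonoid.mem_closure_finset] at hrs
    obtain ⟨c, -, hc⟩ := hrs
    exact ⟨c, by simp [← hc]⟩

/-- Let `(X, 𝒜)` be a minimal `ℤ^d`-action by homeomorphisms on a Cantor set `X`, `C` a
nonempty clopen subset, `y ∈ C`, and let `R⃗_C = R_C(y) − R_C(y)` be the set of return
vectors, where `R_C(y) = {n ∈ ℤ^d : 𝒜(n, y) ∈ C}`. Then there is a finite set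
`F⃗_C ⊆ R⃗_C` with `F⃗_C = −F⃗_C` such that every vector of `R⃗_C` is a linear combination
with nonnegative integer coefficients of vectors of `F⃗_C`. -/
theorem stmt5 (d : ℕ) (X : Type*) [MetricSpace X] [CompactSpace X] [Nonempty X]
    [TotallyDisconnectedSpace X] (hperf : Perfect (Set.univ : Set X))
    (A : (Fin d → ℤ) → X → X)
    (hA0 : ∀ y : X, A 0 y = y)
    (hAadd : ∀ n m : Fin d → ℤ, ∀ y : X, A (n + m) y = A n (A m y))
    (hAcont : ∀ n : Fin d → ℤ, Continuous (A n))
    (hmin : ∀ y : X, Dense (Set.range fun n : Fin d → ℤ => A n y))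
    (C : Set X) (hC : IsClopen C) (hCne : C.Nonempty) (y : X) (hy : y ∈ C) :
    ∃ F : Finset (Fin d → ℤ),
      (↑F : Set (Fin d → ℤ)) ⊆
        ({n : Fin d → ℤ | A n y ∈ C} - {n : Fin d → ℤ | A n y ∈ C}) ∧
      (∀ v ∈ F, -v ∈ F) ∧
      ∀ v ∈ ({n : Fin d → ℤ | A n y ∈ C} - {n : Fin d → ℤ | A n y ∈ C} :
          Set (Fin d → ℤ)),
        ∃ c : (Fin d → ℤ) → ℕ, v = ∑ f ∈ F, (c f : ℤ) • f :=
  stmt5_general d X A hAadd hAcont hmin C hC hCne y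
end

section
/- Let (X,𝒜) be a free minimal action of ℤ^d by homeomorphisms on a Cantor set X, let x ∈ X, and let X = C_0 ⊇ C_1 ⊇ C_2 ⊇ ⋯ be a nested sequence of clopen sets with ⋂_{n≥0} C_n = {x}. Write R_n(x) = {m ∈ ℤ^d : 𝒜(m,x) ∈ C_n} and let F⃗_n be a set of first return vectors associated with C_n. Then for each n ≥ 0 there exist a constant k(n) > 0 and a partition of R_n(x) into pairwise disjoint finite patches {P_n(m)}_{m ∈ R_{n+1}(x)} such that for each m ∈ R_{n+1}(x): (i) P_n(m) ∩ R_{n+1}(x) = {m}; and (ii) the F⃗_n-diameter of P_n(m) is at most k(n). -/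
open Pointwise

/-- Let `(X, 𝒜)` be a free minimal `ℤ^d`-action on a Cantor set `X`, `x ∈ X`, and
`X = C_0 ⊇ C_1 ⊇ ⋯` nested clopen sets with `⋂ C_n = {x}`. Write
`R_n(x) = {m : 𝒜(m, x) ∈ C_n}` and let `F⃗_n` be a set of first return vectors associated
with `C_n`. Then for each `n` there are a constant `k(n) > 0` and a partition of `R_n(x)`
into pairwise disjoint finite patches `{P_n(m)}_{m ∈ R_{n+1}(x)}` such that
`P_n(m) ∩ R_{n+1}(x) = {m}` and the `F⃗_n`-diameter of each `P_n(m)` is at most `k(n)`. -/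
theorem stmt6 (d : ℕ) (X : Type*) [MetricSpace X] [CompactSpace X] [Nonempty X]
    [TotallyDisconnectedSpace X] (hperf : Perfect (Set.univ : Set X))
    (A : (Fin d → ℤ) → X → X)
    (hA0 : ∀ y : X, A 0 y = y)
    (hAadd : ∀ n m : Fin d → ℤ, ∀ y : X, A (n + m) y = A n (A m y))
    (hAcont : ∀ n : Fin d → ℤ, Continuous (A n))
    (hmin : ∀ y : X, Dense (Set.range fun n : Fin d → ℤ => A n y))
    (hfree : ∀ (n : Fin d → ℤ) (y : X), A n y = y → n = 0)
    (x : X) (Cs : ℕ → Set X)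
    (hclopen : ∀ n, IsClopen (Cs n)) (hC0 : Cs 0 = Set.univ)
    (hnested : ∀ n, Cs (n + 1) ⊆ Cs n) (hinter : (⋂ n, Cs n) = {x})
    (F : ℕ → Finset (Fin d → ℤ))
    (hFsub : ∀ n, (↑(F n) : Set (Fin d → ℤ)) ⊆
      ({m : Fin d → ℤ | A m x ∈ Cs n} - {m : Fin d → ℤ | A m x ∈ Cs n}))
    (hFsymm : ∀ n, ∀ v ∈ F n, -v ∈ F n)
    (hFgen : ∀ n, ∀ v ∈ ({m : Fin d → ℤ | A m x ∈ Cs n} -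
        {m : Fin d → ℤ | A m x ∈ Cs n} : Set (Fin d → ℤ)),
      ∃ c : (Fin d → ℤ) → ℕ, v = ∑ f ∈ F n, (c f : ℤ) • f) :
    ∀ n : ℕ, ∃ k : ℕ, 0 < k ∧ ∃ P : (Fin d → ℤ) → Set (Fin d → ℤ),
      (∀ m : Fin d → ℤ, A m x ∈ Cs (n + 1) →
        (P m).Finite ∧
        P m ⊆ {q : Fin d → ℤ | A q x ∈ Cs n} ∧
        P m ∩ {q : Fin d → ℤ | A q x ∈ Cs (n + 1)} = {m} ∧
        (∀ p ∈ P m, ∀ q ∈ P m, ∃ l : List (Fin d → ℤ),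
          (∀ w ∈ l, w ∈ F n) ∧ l.sum = p - q ∧ l.length ≤ k)) ∧
      (∀ m m' : Fin d → ℤ, A m x ∈ Cs (n + 1) → A m' x ∈ Cs (n + 1) → m ≠ m' →
        Disjoint (P m) (P m')) ∧
      (⋃ m ∈ {m : Fin d → ℤ | A m x ∈ Cs (n + 1)}, P m) =
        {q : Fin d → ℤ | A q x ∈ Cs n} := by
  intro n
  classical
  -- `x` belongs to every `Cs k`
  have hx : ∀ k, x ∈ Cs k := by
    intro k
    have hxin : x ∈ ⋂ j, Cs j := by rw [hinter]; rfl
    exact Set.mem_iInter.mp hxin k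
  -- the preimages of `Cs (n+1)` cover `X`
  have hcov0 : (Set.univ : Set X) ⊆ ⋃ t : Fin d → ℤ, (A t) ⁻¹' (Cs (n + 1)) := by
    intro y _
    obtain ⟨z, hz1, hz2⟩ := (hmin y).exists_mem_open (hclopen (n + 1)).2 ⟨x, hx (n + 1)⟩
    obtain ⟨t, ht⟩ := hz1
    exact Set.mem_iUnion.mpr ⟨t, by simpa [ht] using hz2⟩
  obtain ⟨T, hT⟩ := isCompact_univ.elim_finite_subcover _
    (fun t => (hclopen (n + 1)).2.preimage (hAcont t)) hcov0
  have hcov : ∀ q : Fin d → ℤ, ∃ t ∈ T, A (t + q) x ∈ Cs (n + 1) := by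
    intro q
    have h := hT (Set.mem_univ (A q x))
    rw [Set.mem_iUnion₂] at h
    obtain ⟨t, htT, ht⟩ := h
    exact ⟨t, htT, by rw [hAadd]; exact ht⟩
  choose tf htfT htf using hcov
  -- the "nearest return point" assignment
  set f : (Fin d → ℤ) → (Fin d → ℤ) :=
    fun q => if A q x ∈ Cs (n + 1) then q else tf q + q with hfdef
  have hf1 : ∀ q, A (f q) x ∈ Cs (n + 1) := by
    intro q
    by_cases h : A q x ∈ Cs (n + 1)
    · simpa [hfdef, h] using h
    · simpa [hfdef, h] using htf q
  have hf2 : ∀ q, A q x ∈ Cs (n + 1) → f q = q := fun q h => if_pos h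
  set D : Finset (Fin d → ℤ) := insert (0 : Fin d → ℤ) T with hDdef
  have hf3 : ∀ q, f q - q ∈ D := by
    intro q
    by_cases h : A q x ∈ Cs (n + 1)
    · simp [hfdef, h, hDdef]
    · have : f q - q = tf q := by simp [hfdef, h]
      rw [this, hDdef]
      exact Finset.mem_insert_of_mem (htfT q)
  -- representing differences of return vectors by lists of vectors of `F n`
  have hlist : ∀ v ∈ ({m : Fin d → ℤ | A m x ∈ Cs n} -
      {m : Fin d → ℤ | A m x ∈ Cs n} : Set (Fin d → ℤ)),
      ∃ l : List (Fin d → ℤ), (∀ w ∈ l, w ∈ F n) ∧ l.sum = v := by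
    intro v hv
    obtain ⟨c, hc⟩ := hFgen n v hv
    refine ⟨(F n).toList.flatMap (fun g => List.replicate (c g) g), ?_, ?_⟩
    · intro w hw
      rw [List.mem_flatMap] at hw
      obtain ⟨g, hg, hw⟩ := hw
      rw [List.eq_of_mem_replicate hw]
      exact (Finset.mem_toList).mp hg
    · rw [List.flatMap, List.sum_flatten, List.map_map]
      have heq : ∀ g : Fin d → ℤ, (List.sum ∘ fun g => List.replicate (c g) g) g
          = (c g : ℤ) • g := by
        intro g
        simp only [Function.comp_apply, List.sum_replicate, natCast_zsmul]
      calc ((F n).toList.map (List.sum ∘ fun g => List.replicate (c g) g)).sum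
          = ((F n).toList.map (fun g => (c g : ℤ) • g)).sum := by
            congr 1; exact List.map_congr_left (fun g _ => heq g)
        _ = ∑ g ∈ F n, (c g : ℤ) • g := Finset.sum_map_toList _ _
        _ = v := hc.symm
  -- length function and the constant k
  set len : (Fin d → ℤ) → ℕ := fun v =>
    if h : v ∈ ({m : Fin d → ℤ | A m x ∈ Cs n} -
        {m : Fin d → ℤ | A m x ∈ Cs n} : Set (Fin d → ℤ)) then
      (hlist v h).choose.length else 0 with hlendef
  set S : Finset (Fin d → ℤ) := D - D with hSdef
  refine ⟨S.sup len + 1, Nat.succ_pos _, fun m => {q | A q x ∈ Cs n ∧ f q = m}, ?_, ?_, ?_⟩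
  · intro m hm
    refine ⟨?_, ?_, ?_, ?_⟩
    · -- finiteness
      apply Set.Finite.subset (D.finite_toSet.image (fun t => m - t))
      intro q hq
      have h3 := hf3 q
      rw [hq.2] at h3
      exact ⟨m - q, h3, sub_sub_cancel m q⟩
    · exact fun q hq => hq.1
    · -- intersection with R_{n+1}
      ext q
      constructor
      · rintro ⟨⟨_, hfq⟩, hq1⟩
        have := hf2 q hq1
        rw [this] at hfq
        exact hfq
      · intro hq
        have hq' : q = m := hq
        subst hq'
        exact ⟨⟨hnested n hm, hf2 q hm⟩, hm⟩
    · -- bounded F-diameter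
      intro p hp q hq
      have hv : p - q ∈ ({m : Fin d → ℤ | A m x ∈ Cs n} -
          {m : Fin d → ℤ | A m x ∈ Cs n} : Set (Fin d → ℤ)) :=
        Set.sub_mem_sub hp.1 hq.1
      have hvS : p - q ∈ S := by
        have h1 : m - q ∈ D := by have := hf3 q; rwa [hq.2] at this
        have h2 : m - p ∈ D := by have := hf3 p; rwa [hp.2] at this
        have : (m - q) - (m - p) = p - q := by abel
        rw [hSdef, ← this]
        exact Finset.sub_mem_sub h1 h2
      refine ⟨(hlist (p - q) hv).choose, (hlist (p - q) hv).choose_spec.1,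
        (hlist (p - q) hv).choose_spec.2, ?_⟩
      have hlen : len (p - q) = (hlist (p - q) hv).choose.length := dif_pos hv
      rw [← hlen]
      exact le_trans (Finset.le_sup hvS) (Nat.le_succ _)
  · -- disjointness
    intro m m' _ _ hne
    rw [Set.disjoint_left]
    rintro q ⟨_, hq⟩ ⟨_, hq'⟩
    exact hne (hq ▸ hq' ▸ rfl)
  · -- union
    ext q
    simp only [Set.mem_iUnion, Set.mem_setOf_eq]
    constructor
    · rintro ⟨m, _, hq, _⟩
      exact hq
    · intro hq
      exact ⟨f q, hf1 q, hq, rfl⟩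
end

section
/- Let (X,𝒜) be a free minimal ℤ^d-action on a Cantor set X with an associated combinatorial data (x, {C_n}_{n≥0}, {{P_n(m)}_{m ∈ R_{n+1}(x)}}_{n≥0}, {F⃗_n}_{n≥0}), let k = 1 or k = d, let θ ∈ ℝ^d, and suppose h : X → 𝕆^k is an extension of (𝕆^k, 𝒜^k_θ) with h(x) = 0. Then: (a) the θ-lengths l^k_{n,θ} tend to 0 as n → ∞; and (b) for each ε > 0 there exists N > 0 such that for any pair of points n̄, m̄ ∈ R_N(x), one has |||h(𝒜(n̄,x)) − h(𝒜(m̄,x))||| ≤ ε. -/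
open Pointwise

/-- `c^d_θ(p) = (p_1θ_1, …, p_dθ_d) mod ℤ^d ∈ 𝕋^d = (ℝ/ℤ)^d`; also the image of `0` under
the `ℤ^d`-action `𝒜^d_θ` applied to `p`. -/
noncomputable def cD (d : ℕ) (θ : Fin d → ℝ) (p : Fin d → ℤ) : Fin d → AddCircle (1 : ℝ) :=
  fun i => (((p i : ℝ) * θ i : ℝ) : AddCircle (1 : ℝ))

/-- `c^1_θ(p) = ⟨θ, p⟩ mod ℤ ∈ 𝕋^1 = ℝ/ℤ`; also the image of `0` under the `ℤ^d`-action
`𝒜^1_θ` applied to `p`. -/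
noncomputable def c1 (d : ℕ) (θ : Fin d → ℝ) (p : Fin d → ℤ) : AddCircle (1 : ℝ) :=
  ((∑ i, θ i * (p i : ℝ) : ℝ) : AddCircle (1 : ℝ))

/-- The Euclidean distance to `0` on the torus `𝕋^d = (ℝ/ℤ)^d`. -/
noncomputable def torusNormD {d : ℕ} (y : Fin d → AddCircle (1 : ℝ)) : ℝ :=
  Real.sqrt (∑ i, ‖y i‖ ^ 2)

/-- The `θ`-length of dimension `d` of a finite set `F ⊆ ℤ^d`:
`l^d_θ(F) = max_{v ∈ F} |||c^d_θ(v)|||`. -/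
noncomputable def thetaLenD (d : ℕ) (θ : Fin d → ℝ) (F : Finset (Fin d → ℤ)) : ℝ :=
  sSup ((fun v => torusNormD (cD d θ v)) '' (↑F : Set (Fin d → ℤ)))

/-- The `θ`-length of dimension `1` of a finite set `F ⊆ ℤ^d`:
`l^1_θ(F) = max_{v ∈ F} |||c^1_θ(v)|||`. -/
noncomputable def thetaLen1 (d : ℕ) (θ : Fin d → ℝ) (F : Finset (Fin d → ℤ)) : ℝ :=
  sSup ((fun v => ‖c1 d θ v‖) '' (↑F : Set (Fin d → ℤ)))

theorem keyAux {X : Type*} [TopologicalSpace X] [CompactSpace X]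
    (x : X) (Cs : ℕ → Set X) (hclosed : ∀ n, IsClosed (Cs n))
    (hnested : ∀ n, Cs (n + 1) ⊆ Cs n) (hinter : (⋂ n, Cs n) = {x})
    {U : Set X} (hU : U ∈ nhds x) : ∃ N : ℕ, 0 < N ∧ Cs N ⊆ U := by
  have hanti : Antitone Cs := antitone_nat_of_succ_le hnested
  obtain ⟨N, hN⟩ := exists_subset_nhds_of_compactSpace
    (fun i j => ⟨max i j, hanti (le_max_left i j), hanti (le_max_right i j)⟩)
    hclosed (fun y hy => by
      rw [hinter] at hy
      rwa [Set.mem_singleton_iff.1 hy])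
  exact ⟨N + 1, Nat.succ_pos _, (hanti (Nat.le_succ N)).trans hN⟩

theorem combAux {X E : Type*} [TopologicalSpace X] [CompactSpace X] [SubtractionCommMonoid E]
    {d : ℕ} (A : (Fin d → ℤ) → X → X) (x : X) (Cs : ℕ → Set X)
    (hclosed : ∀ n, IsClosed (Cs n))
    (hnested : ∀ n, Cs (n + 1) ⊆ Cs n) (hinter : (⋂ n, Cs n) = {x})
    (F : ℕ → Finset (Fin d → ℤ))
    (hFsub : ∀ n, (↑(F n) : Set (Fin d → ℤ)) ⊆
      ({m : Fin d → ℤ | A m x ∈ Cs n} - {m : Fin d → ℤ | A m x ∈ Cs n}))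
    (c : (Fin d → ℤ) → E) (hc : ∀ p q, c (p - q) = c p - c q)
    (ν : E → ℝ) (hν0 : ∀ e, 0 ≤ ν e)
    (h : X → E) (hx : h x = 0) (heq : ∀ n y, h (A n y) = h y + c n)
    (Hν : ∀ ε : ℝ, 0 < ε → ∃ U ∈ nhds x, ∀ y ∈ U, ∀ z ∈ U, ν (h y - h z) ≤ ε) :
    Filter.Tendsto (fun n => sSup ((fun v => ν (c v)) '' ((F n : Set (Fin d → ℤ)))))
      Filter.atTop (nhds 0) ∧
    ∀ ε : ℝ, 0 < ε → ∃ N : ℕ, 0 < N ∧ ∀ nn mm : Fin d → ℤ,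
      A nn x ∈ Cs N → A mm x ∈ Cs N → ν (h (A nn x) - h (A mm x)) ≤ ε := by
  have hanti : Antitone Cs := antitone_nat_of_succ_le hnested
  have partB : ∀ ε : ℝ, 0 < ε → ∃ N : ℕ, 0 < N ∧ ∀ nn mm : Fin d → ℤ,
      A nn x ∈ Cs N → A mm x ∈ Cs N → ν (h (A nn x) - h (A mm x)) ≤ ε := by
    intro ε hε
    obtain ⟨U, hU, hUprop⟩ := Hν ε hε
    obtain ⟨N, hNpos, hNsub⟩ := keyAux x Cs hclosed hnested hinter hU
    exact ⟨N, hNpos, fun nn mm h1 h2 => hUprop _ (hNsub h1) _ (hNsub h2)⟩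
  refine ⟨?_, partB⟩
  rw [Metric.tendsto_atTop]
  intro ε hε
  obtain ⟨N, hNpos, hN⟩ := partB (ε / 2) (half_pos hε)
  refine ⟨N, fun n hn => ?_⟩
  have hnonneg : 0 ≤ sSup ((fun v => ν (c v)) '' ((F n : Set (Fin d → ℤ)))) :=
    Real.sSup_nonneg (by rintro y ⟨v, hv, rfl⟩; exact hν0 _)
  have hle : sSup ((fun v => ν (c v)) '' ((F n : Set (Fin d → ℤ)))) ≤ ε / 2 := by
    refine Real.sSup_le ?_ (le_of_lt (half_pos hε))
    rintro y ⟨v, hv, rfl⟩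
    obtain ⟨p, hp, q, hq, rfl⟩ := Set.mem_sub.1 (hFsub n hv)
    have h1 : c p - c q = h (A p x) - h (A q x) := by
      rw [heq p x, heq q x, hx, zero_add, zero_add]
    show ν (c (p - q)) ≤ ε / 2
    rw [hc, h1]
    exact hN p q (hanti hn hp) (hanti hn hq)
  rw [Real.dist_eq, sub_zero, abs_of_nonneg hnonneg]
  linarith

theorem cD_sub (d : ℕ) (θ : Fin d → ℝ) (p q : Fin d → ℤ) :
    cD d θ (p - q) = cD d θ p - cD d θ q := by
  funext i
  simp only [cD, Pi.sub_apply]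
  have : (((p i - q i : ℤ) : ℝ) * θ i) = (p i : ℝ) * θ i - (q i : ℝ) * θ i := by
    push_cast; ring
  rw [this, QuotientAddGroup.mk_sub]

theorem c1_sub (d : ℕ) (θ : Fin d → ℝ) (p q : Fin d → ℤ) :
    c1 d θ (p - q) = c1 d θ p - c1 d θ q := by
  simp only [c1]
  have : (∑ i, θ i * (((p - q) i : ℤ) : ℝ)) =
      (∑ i, θ i * ((p i : ℤ) : ℝ)) - ∑ i, θ i * ((q i : ℤ) : ℝ) := by
    rw [← Finset.sum_sub_distrib]
    apply Finset.sum_congr rfl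
    intro i _
    simp only [Pi.sub_apply]
    push_cast
    ring
  rw [this, QuotientAddGroup.mk_sub]
/-- Lemma: if `(X, 𝒜)` (a free minimal `ℤ^d`-action on a Cantor set with an associated
combinatorial data) is an extension of `(𝕆^k, 𝒜^k_θ)` (for `k = d` or `k = 1`) via `h` with
`h(x) = 0`, then (a) the `θ`-lengths `l^k_{n,θ}` tend to `0`, and (b) for each `ε > 0` there
is `N > 0` such that `|||h(𝒜(n̄, x)) − h(𝒜(m̄, x))||| ≤ ε` for all `n̄, m̄ ∈ R_N(x)`. -/
theorem stmt8 (d : ℕ) (X : Type*) [MetricSpace X] [CompactSpace X] [Nonempty X]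
    [TotallyDisconnectedSpace X] (hperf : Perfect (Set.univ : Set X))
    (A : (Fin d → ℤ) → X → X)
    (hA0 : ∀ y : X, A 0 y = y)
    (hAadd : ∀ n m : Fin d → ℤ, ∀ y : X, A (n + m) y = A n (A m y))
    (hAcont : ∀ n : Fin d → ℤ, Continuous (A n))
    (hmin : ∀ y : X, Dense (Set.range fun n : Fin d → ℤ => A n y))
    (hfree : ∀ (n : Fin d → ℤ) (y : X), A n y = y → n = 0)
    (x : X) (Cs : ℕ → Set X)
    (hclopen : ∀ n, IsClopen (Cs n)) (hC0 : Cs 0 = Set.univ)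
    (hnested : ∀ n, Cs (n + 1) ⊆ Cs n) (hinter : (⋂ n, Cs n) = {x})
    (F : ℕ → Finset (Fin d → ℤ))
    (hFsub : ∀ n, (↑(F n) : Set (Fin d → ℤ)) ⊆
      ({m : Fin d → ℤ | A m x ∈ Cs n} - {m : Fin d → ℤ | A m x ∈ Cs n}))
    (hFsymm : ∀ n, ∀ v ∈ F n, -v ∈ F n)
    (hFgen : ∀ n, ∀ v ∈ ({m : Fin d → ℤ | A m x ∈ Cs n} -
        {m : Fin d → ℤ | A m x ∈ Cs n} : Set (Fin d → ℤ)),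
      ∃ c : (Fin d → ℤ) → ℕ, v = ∑ f ∈ F n, (c f : ℤ) • f)
    (P : ℕ → (Fin d → ℤ) → Set (Fin d → ℤ)) (kb : ℕ → ℕ)
    (hPfin : ∀ n, ∀ m : Fin d → ℤ, A m x ∈ Cs (n + 1) → (P n m).Finite)
    (hPsub : ∀ n, ∀ m : Fin d → ℤ, A m x ∈ Cs (n + 1) →
      P n m ⊆ {q : Fin d → ℤ | A q x ∈ Cs n})
    (hPcap : ∀ n, ∀ m : Fin d → ℤ, A m x ∈ Cs (n + 1) →
      P n m ∩ {q : Fin d → ℤ | A q x ∈ Cs (n + 1)} = {m})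
    (hPdisj : ∀ n, ∀ m m' : Fin d → ℤ, A m x ∈ Cs (n + 1) → A m' x ∈ Cs (n + 1) →
      m ≠ m' → Disjoint (P n m) (P n m'))
    (hPcover : ∀ n, (⋃ m ∈ {m : Fin d → ℤ | A m x ∈ Cs (n + 1)}, P n m) =
      {q : Fin d → ℤ | A q x ∈ Cs n})
    (hPdiam : ∀ n, ∀ m : Fin d → ℤ, A m x ∈ Cs (n + 1) → ∀ p ∈ P n m, ∀ q ∈ P n m,
      ∃ l : List (Fin d → ℤ), (∀ w ∈ l, w ∈ F n) ∧ l.sum = p - q ∧ l.length ≤ kb n)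
    (θ : Fin d → ℝ) :
    (∀ h : X → (Fin d → AddCircle (1 : ℝ)), Continuous h →
      Set.range h = closure (Set.range (cD d θ)) →
      (∀ (n : Fin d → ℤ) (y : X), h (A n y) = h y + cD d θ n) →
      h x = 0 →
      (Filter.Tendsto (fun n => thetaLenD d θ (F n)) Filter.atTop (nhds 0) ∧
        ∀ ε : ℝ, 0 < ε → ∃ N : ℕ, 0 < N ∧ ∀ nn mm : Fin d → ℤ,
          A nn x ∈ Cs N → A mm x ∈ Cs N →
          torusNormD (h (A nn x) - h (A mm x)) ≤ ε)) ∧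
    (∀ h : X → AddCircle (1 : ℝ), Continuous h →
      Set.range h = closure (Set.range (c1 d θ)) →
      (∀ (n : Fin d → ℤ) (y : X), h (A n y) = h y + c1 d θ n) →
      h x = 0 →
      (Filter.Tendsto (fun n => thetaLen1 d θ (F n)) Filter.atTop (nhds 0) ∧
        ∀ ε : ℝ, 0 < ε → ∃ N : ℕ, 0 < N ∧ ∀ nn mm : Fin d → ℤ,
          A nn x ∈ Cs N → A mm x ∈ Cs N →
          ‖h (A nn x) - h (A mm x)‖ ≤ ε)) := by

  constructor
  · intro h hcont _hrange heq hx0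
    have hν0 : ∀ e : Fin d → AddCircle (1 : ℝ), 0 ≤ torusNormD e :=
      fun e => Real.sqrt_nonneg _
    have Hν : ∀ ε : ℝ, 0 < ε → ∃ U ∈ nhds x, ∀ y ∈ U, ∀ z ∈ U,
        torusNormD (h y - h z) ≤ ε := by
      intro ε hε
      set s := Real.sqrt d with hs
      have hs0 : 0 ≤ s := Real.sqrt_nonneg _
      set δ := ε / (2 * (s + 1)) with hδdef
      have hδpos : 0 < δ := by positivity
      have key : δ * (2 * (s + 1)) = ε := by
        rw [hδdef]; field_simp
      refine ⟨h ⁻¹' Metric.ball 0 δ, hcont.continuousAt.preimage_mem_nhds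
        (by rw [hx0]; exact Metric.ball_mem_nhds _ hδpos), ?_⟩
      intro y hy z hz
      calc torusNormD (h y - h z) ≤ Real.sqrt (∑ _i : Fin d, (2 * δ) ^ 2) := by
            unfold torusNormD
            apply Real.sqrt_le_sqrt
            apply Finset.sum_le_sum
            intro i _
            have h1 : ‖(h y - h z) i‖ ≤ 2 * δ := by
              rw [Pi.sub_apply]
              calc ‖h y i - h z i‖ ≤ ‖h y i‖ + ‖h z i‖ := norm_sub_le _ _
                _ ≤ ‖h y‖ + ‖h z‖ :=
                    add_le_add (norm_le_pi_norm _ i) (norm_le_pi_norm _ i)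
                _ ≤ δ + δ :=
                    add_le_add (mem_ball_zero_iff.1 hy).le (mem_ball_zero_iff.1 hz).le
                _ = 2 * δ := by ring
            exact pow_le_pow_left₀ (norm_nonneg _) h1 2
        _ = s * (2 * δ) := by
            rw [Finset.sum_const, Finset.card_univ, Fintype.card_fin, nsmul_eq_mul,
              Real.sqrt_mul (by positivity), Real.sqrt_sq (by positivity)]
        _ ≤ ε := by nlinarith [hδpos.le, hs0]
    exact combAux A x Cs (fun n => (hclopen n).isClosed) hnested hinter F hFsub
      (cD d θ) (cD_sub d θ) torusNormD hν0 h hx0 heq Hν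
  · intro h hcont _hrange heq hx0
    have Hν : ∀ ε : ℝ, 0 < ε → ∃ U ∈ nhds x, ∀ y ∈ U, ∀ z ∈ U,
        ‖h y - h z‖ ≤ ε := by
      intro ε hε
      refine ⟨h ⁻¹' Metric.ball 0 (ε / 2), hcont.continuousAt.preimage_mem_nhds
        (by rw [hx0]; exact Metric.ball_mem_nhds _ (half_pos hε)), ?_⟩
      intro y hy z hz
      calc ‖h y - h z‖ ≤ ‖h y‖ + ‖h z‖ := norm_sub_le _ _
        _ ≤ ε / 2 + ε / 2 :=
            add_le_add (mem_ball_zero_iff.1 hy).le (mem_ball_zero_iff.1 hz).le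
        _ = ε := by ring
    exact combAux A x Cs (fun n => (hclopen n).isClosed) hnested hinter F hFsub
      (c1 d θ) (c1_sub d θ) (fun e => ‖e‖) (fun e => norm_nonneg _) h hx0 heq Hν
end
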